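/- Let f(x) = max{a_i^T x + b_i : i ∈ [p]} be a convex continuous piecewise linear function on ℝ^n, given as the maximum of p affine functions. Then there exist integer coefficients c_S ∈ ℤ, indexed by the nonempty subsets S ⊆ [p] with |S| ≤ n+1, such that f(x) = Σ_{S ⊆ [p], |S| ≤ n+1} c_S · max{a_i^T x + b_i : i ∈ S} for all x ∈ ℝ^n. -/

import Mathlib

/-- Maximum of `v` over a finite set `S` (junk value `0` if `S = ∅`). -/
noncomputable def maxOnFinset {ι : Type*} (S : Finset ι) (v : ι → ℝ) : ℝ :=
  if h : S.Nonempty then S.sup' h v else 0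

/-- `f ∈ MAX_n(p)`: `f` is a finite linear combination of maxima of (at most) `p`
affine functions. -/
def InMAX (n p : ℕ) (f : (Fin n → ℝ) → ℝ) : Prop :=
  ∃ (N : ℕ) (lam : Fin N → ℝ) (a : Fin N → Fin p → Fin n → ℝ) (b : Fin N → Fin p → ℝ),
    ∀ x, f x = ∑ j, lam j * maxOnFinset Finset.univ (fun i => (∑ t, a j i t * x t) + b j i)

open Finset

/-! Write `ℓ i x = a i ⬝ᵥ x + b i`. If `|S| ≥ n + 2`, the vectors `(a i, 1)`, `i ∈ S`, are
linearly dependent; after a sign change the relation `w` has `∑ w i = 0`, `∑ w i • a i = 0` and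
`∑ w i * b i ≥ 0`. Splitting `S` into `N = {w < 0}` and `A = {w ≥ 0}`, this forces
`min_N ℓ ≤ max_A ℓ` at every point, and the max–min inclusion–exclusion identity then writes
`max_S ℓ` as a `±1`-combination of the maxima over `A ∪ T`, `T ⊊ N`. These are proper subsets of
`S`, so induction on `S` leaves only maxima over at most `n + 1` of the affine functions. -/

open Submodule Module

theorem max_add_max_eq_max_max_add_max_min {α : Type*} [LinearOrder α] [AddCommSemigroup α]
    (M u v : α) :
    max M u + max M v = max M (max u v) + max M (min u v) := by
  rw [max_min_distrib_left, show max M (max u v) = max (max M u) (max M v) from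
    sup_sup_distrib_left M u v, add_comm (max (max M u) _), min_add_max]

theorem Finset.union_ssubset_union_of_disjoint {ι : Type*} [DecidableEq ι] {A T N : Finset ι}
    (h : Disjoint A N) (hT : T ⊂ N) : A ∪ T ⊂ A ∪ N := by
  obtain ⟨j, hjN, hjT⟩ := exists_of_ssubset hT
  refine (ssubset_iff_of_subset (union_subset_union_right hT.subset)).2
    ⟨j, mem_union_right A hjN, ?_⟩
  rw [mem_union, not_or]
  exact ⟨disjoint_right.1 h hjN, hjT⟩

section MaxOnFinset

variable {ι : Type*} (y : ι → ℝ)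

theorem maxOnFinset_of_nonempty {S : Finset ι} (hS : S.Nonempty) :
    maxOnFinset S y = S.sup' hS y :=
  dif_pos hS

variable [DecidableEq ι]

theorem maxOnFinset_insert (i : ι) {A : Finset ι} (hA : A.Nonempty) :
    maxOnFinset (insert i A) y = max (y i) (maxOnFinset A y) := by
  rw [maxOnFinset_of_nonempty y hA, maxOnFinset_of_nonempty y (insert_nonempty i A),
    sup'_insert hA]

theorem sum_powerset_neg_one_pow_mul_maxOnFinset_union {A N : Finset ι} (hA : A.Nonempty)
    (hN : N.Nonempty) :
    ∑ T ∈ N.powerset, (-1 : ℝ) ^ T.card * maxOnFinset (A ∪ T) y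
      = maxOnFinset A y - max (maxOnFinset A y) (N.inf' hN y) := by
  induction hN using Nonempty.cons_induction generalizing A with
  | singleton i =>
    rw [show ({i} : Finset ι).powerset = {∅, {i}} from rfl, sum_pair (singleton_ne_empty i).symm,
      union_empty, union_singleton, maxOnFinset_insert y i hA, inf'_singleton, max_comm (y i)]
    simp [sub_eq_add_neg]
  | cons i s hi hs ih =>
    have hsum : ∑ T ∈ s.powerset, (-1 : ℝ) ^ (insert i T).card * maxOnFinset (A ∪ insert i T) y
        = -∑ T ∈ s.powerset, (-1 : ℝ) ^ T.card * maxOnFinset (insert i A ∪ T) y := by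
      rw [← sum_neg_distrib]
      refine sum_congr rfl fun T hT => ?_
      rw [card_insert_of_notMem fun h => hi (mem_powerset.1 hT h), union_insert, insert_union]
      ring
    rw [inf'_cons hs, cons_eq_insert, sum_powerset_insert hi, hsum, ih hA,
      ih (insert_nonempty i A), maxOnFinset_insert y i hA]
    have hmax := max_add_max_eq_max_max_add_max_min (maxOnFinset A y) (y i) (s.inf' hs y)
    rw [max_comm (y i), max_assoc]
    linarith

theorem maxOnFinset_union_eq_sum_powerset_erase {A N : Finset ι} (hA : A.Nonempty)
    (hN : N.Nonempty) (h : N.inf' hN y ≤ maxOnFinset A y) :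
    maxOnFinset (A ∪ N) y
      = ∑ T ∈ N.powerset.erase N, (-1 : ℝ) ^ (N.card + T.card + 1) * maxOnFinset (A ∪ T) y := by
  have h0 := sum_powerset_neg_one_pow_mul_maxOnFinset_union y hA hN
  rw [max_eq_left h, sub_self, ← add_sum_erase _ _ (mem_powerset_self N)] at h0
  calc maxOnFinset (A ∪ N) y = (-1) ^ N.card * ((-1) ^ N.card * maxOnFinset (A ∪ N) y) := by
        rw [← mul_assoc, ← pow_add, Even.neg_one_pow ⟨_, rfl⟩, one_mul]
    _ = (-1) ^ N.card * -∑ T ∈ N.powerset.erase N, (-1) ^ T.card * maxOnFinset (A ∪ T) y := by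
        rw [eq_neg_of_add_eq_zero_left h0]
    _ = _ := by
        rw [mul_neg, mul_sum, ← sum_neg_distrib]
        exact sum_congr rfl fun T _ => by ring

end MaxOnFinset

section SignedWeights

variable {ι : Type*} {S : Finset ι} {w : ι → ℝ}

theorem filter_neg_nonempty_of_sum_eq_zero (hw : ∑ i ∈ S, w i = 0) (hne : ∃ i ∈ S, w i ≠ 0) :
    (S.filter (w · < 0)).Nonempty := by
  by_contra h
  rw [not_nonempty_iff_eq_empty, filter_eq_empty_iff] at h
  obtain ⟨i, hi, hwi⟩ := hne
  exact hwi ((sum_eq_zero_iff_of_nonneg fun j hj => not_lt.1 (h hj)).1 hw i hi)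

theorem filter_nonneg_nonempty_of_sum_eq_zero (hw : ∑ i ∈ S, w i = 0)
    (hne : ∃ i ∈ S, w i ≠ 0) : (S.filter (0 ≤ w ·)).Nonempty := by
  obtain ⟨i, hi⟩ := filter_neg_nonempty_of_sum_eq_zero (S := S) (w := -w) (by simp [hw])
    (by simpa using hne)
  simp only [mem_filter, Pi.neg_apply, neg_lt_zero] at hi
  exact ⟨i, mem_filter.2 ⟨hi.1, hi.2.le⟩⟩

theorem inf'_filter_neg_le_sup'_filter_nonneg (y : ι → ℝ) (hw : ∑ i ∈ S, w i = 0)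
    (hwy : 0 ≤ ∑ i ∈ S, w i * y i) (hN : (S.filter (w · < 0)).Nonempty)
    (hP : (S.filter (0 ≤ w ·)).Nonempty) :
    (S.filter (w · < 0)).inf' hN y ≤ (S.filter (0 ≤ w ·)).sup' hP y := by
  have hsplit : ∀ g : ι → ℝ,
      ∑ i ∈ S, g i = ∑ i ∈ S.filter (0 ≤ w ·), g i + ∑ i ∈ S.filter (w · < 0), g i := by
    intro g
    rw [← sum_filter_add_sum_filter_not S (0 ≤ w ·)]
    simp only [not_le]
  set m := (S.filter (w · < 0)).inf' hN y
  set M := (S.filter (0 ≤ w ·)).sup' hP y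
  have hP_le : ∑ i ∈ S.filter (0 ≤ w ·), w i * y i ≤ (∑ i ∈ S.filter (0 ≤ w ·), w i) * M := by
    rw [sum_mul]
    exact sum_le_sum fun i hi => mul_le_mul_of_nonneg_left (le_sup' y hi) (mem_filter.1 hi).2
  have hN_le : ∑ i ∈ S.filter (w · < 0), w i * y i ≤ (∑ i ∈ S.filter (w · < 0), w i) * m := by
    rw [sum_mul]
    exact sum_le_sum fun i hi => mul_le_mul_of_nonpos_left (inf'_le y hi) (mem_filter.1 hi).2.le
  have hwN : ∑ i ∈ S.filter (w · < 0), w i < 0 := sum_neg (fun i hi => (mem_filter.1 hi).2) hN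
  rw [hsplit, add_eq_zero_iff_eq_neg] at hw
  rw [hsplit] at hwy
  rw [hw] at hP_le
  by_contra! h
  nlinarith [mul_neg_of_neg_of_pos hwN (sub_pos.2 h)]

end SignedWeights

theorem exists_affine_relation {ι K E : Type*} [Field K] [AddCommGroup E] [Module K E]
    [FiniteDimensional K E] (a : ι → E) {S : Finset ι} (hS : finrank K E + 1 < S.card) :
    ∃ w : ι → K, (∃ i ∈ S, w i ≠ 0) ∧ ∑ i ∈ S, w i = 0 ∧ ∑ i ∈ S, w i • a i = 0 := by
  have hdep : ¬LinearIndepOn K (fun i => (a i, (1 : K))) (S : Set ι) := fun h => by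
    have hcard := LinearIndependent.fintype_card_le_finrank h
    simp only [SetLike.coe_sort_coe, Fintype.card_coe, finrank_prod, finrank_self] at hcard
    omega
  obtain ⟨w, hw, i, hi, hwi⟩ := not_linearIndepOn_finset_iff.1 hdep
  exact ⟨w, ⟨i, hi, hwi⟩, by simpa [Prod.snd_sum] using congrArg Prod.snd hw,
    by simpa [Prod.fst_sum] using congrArg Prod.fst hw⟩

theorem exists_relation_dotProduct_add {ι m : Type*} [Fintype m] (a : ι → m → ℝ) (b : ι → ℝ)
    {S : Finset ι} (hS : Fintype.card m + 1 < S.card) :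
    ∃ w : ι → ℝ, (∃ i ∈ S, w i ≠ 0) ∧ ∑ i ∈ S, w i = 0 ∧
      ∀ x, 0 ≤ ∑ i ∈ S, w i * (a i ⬝ᵥ x + b i) := by
  obtain ⟨w, hne, hw, hwa⟩ := exists_affine_relation (K := ℝ) a (by simpa using hS)
  have hconst : ∀ x, ∑ i ∈ S, w i * (a i ⬝ᵥ x + b i) = ∑ i ∈ S, w i * b i := by
    intro x
    have hlin : ∑ i ∈ S, w i * (a i ⬝ᵥ x) = 0 := by
      simp_rw [← smul_eq_mul, ← smul_dotProduct, ← sum_dotProduct, hwa, zero_dotProduct]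
    rw [← add_zero (∑ i ∈ S, w i * b i), ← hlin, ← sum_add_distrib]
    exact sum_congr rfl fun i _ => by ring
  rcases le_total 0 (∑ i ∈ S, w i * b i) with hb | hb
  · exact ⟨w, hne, hw, fun x => (hconst x).symm ▸ hb⟩
  · refine ⟨-w, by simpa using hne, by simp [hw], fun x => ?_⟩
    simp only [Pi.neg_apply, neg_mul, sum_neg_distrib, hconst]
    linarith

section Span

variable {ι X : Type*} (ℓ : ι → X → ℝ)

noncomputable def maxFun (T : Finset ι) (x : X) : ℝ :=
  maxOnFinset T fun i => ℓ i x

variable [DecidableEq ι]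

theorem maxFun_mem_span_of_forall_relation {k : ℕ}
    (hrel : ∀ S : Finset ι, k < S.card → ∃ w : ι → ℝ,
      (∃ i ∈ S, w i ≠ 0) ∧ ∑ i ∈ S, w i = 0 ∧ ∀ x, 0 ≤ ∑ i ∈ S, w i * ℓ i x)
    {S : Finset ι} (hS : S.Nonempty) :
    maxFun ℓ S ∈ span ℤ (maxFun ℓ '' {T | T.Nonempty ∧ T.card ≤ k}) := by
  induction S using Finset.strongInduction with
  | H S ih =>
  by_cases hk : S.card ≤ k
  · exact subset_span ⟨S, ⟨hS, hk⟩, rfl⟩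
  obtain ⟨w, hne, hw, hwℓ⟩ := hrel S (not_le.1 hk)
  set N := S.filter (w · < 0)
  set A := S.filter (0 ≤ w ·)
  have hN : N.Nonempty := filter_neg_nonempty_of_sum_eq_zero hw hne
  have hA : A.Nonempty := filter_nonneg_nonempty_of_sum_eq_zero hw hne
  have hAN : A ∪ N = S := by
    rw [union_comm, ← filter_or]
    exact filter_true_of_mem fun i _ => lt_or_ge (w i) 0
  have hdisj : Disjoint A N := disjoint_filter.2 fun i _ h₁ h₂ => not_lt.2 h₁ h₂
  have hdecomp : maxFun ℓ S
      = ∑ T ∈ N.powerset.erase N, (-1 : ℤ) ^ (N.card + T.card + 1) • maxFun ℓ (A ∪ T) := by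
    funext x
    have hdom := inf'_filter_neg_le_sup'_filter_nonneg (ℓ · x) hw (hwℓ x) hN hA
    rw [← maxOnFinset_of_nonempty _ hA] at hdom
    rw [Finset.sum_apply, ← hAN]
    simp only [maxFun, Pi.smul_apply, zsmul_eq_mul, Int.cast_pow, Int.cast_neg, Int.cast_one]
    exact maxOnFinset_union_eq_sum_powerset_erase _ hA hN hdom
  rw [hdecomp]
  refine sum_mem fun T hT => zsmul_mem (ih _ ?_ (hA.mono subset_union_left)) _
  rw [← hAN]
  exact union_ssubset_union_of_disjoint hdisj
    (ssubset_of_subset_of_ne (mem_powerset.1 (mem_of_mem_erase hT)) (ne_of_mem_erase hT))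

end Span

/-- if `f(x) = max{⟨a i, x⟩ + b i : i ∈ [p]}` is a convex CPWL function
on `ℝⁿ`, then there are integer coefficients `c_S`, indexed by the nonempty subsets
`S ⊆ [p]` with `|S| ≤ n+1`, such that
`f(x) = Σ_S c_S · max{⟨a i, x⟩ + b i : i ∈ S}` for all `x`. -/
theorem convex_cpwl_integer_combination (n p : ℕ) (hp : 0 < p)
    (a : Fin p → Fin n → ℝ) (b : Fin p → ℝ) (f : (Fin n → ℝ) → ℝ)
    (hf : ∀ x, f x = maxOnFinset Finset.univ (fun i => (∑ t, a i t * x t) + b i)) :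
    ∃ c : Finset (Fin p) → ℤ, ∀ x, f x =
      ∑ S ∈ Finset.univ.filter (fun S : Finset (Fin p) => S.Nonempty ∧ S.card ≤ n + 1),
        (c S : ℝ) * maxOnFinset S (fun i => (∑ t, a i t * x t) + b i) := by
  have hmem := maxFun_mem_span_of_forall_relation (fun i x => a i ⬝ᵥ x + b i) (k := n + 1)
    (fun S hS => exists_relation_dotProduct_add a b (by simpa using hS))
    (univ_nonempty_iff.2 ⟨⟨0, hp⟩⟩)
  rw [← coe_filter_univ, mem_span_image_finset_iff_exists_fun'] at hmem
  obtain ⟨c, hc⟩ := hmem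
  refine ⟨c, fun x => ?_⟩
  simpa [hf, maxFun, Finset.sum_apply, dotProduct] using (congrFun hc x).symm
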